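/- arXiv:2311.08502 — 4 statements merged into one kernel-verified Lean document; each statement's English description precedes it below -/
import Mathlib

section
/- For every n ≥ 1 and every Boolean vector b : Fin n → Bool, there exists θ : Fin n → ℝ with θ_p ∈ {0, π/2, 3π/2} for every p, such that for every p ∈ Fin n: Real.cos(θ_p) = (if b_p then 0 else 1) and Real.cos(π · ∑_{i < p} Real.sin(θ_i)) · Real.sin(θ_p) = (if b_p then 1 else 0). -/
/-!
Put `θ_p = 0` at a `false` entry and, at a `true` entry, `θ_p = π/2` or `3π/2` according to
the parity of the number `c_p` of earlier `true` entries, so that `sin θ_p = (-1)^{c_p}`.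
These signs alternate, so the partial sums `∑_{i<p} sin θ_i` telescope to `(1 - (-1)^{c_p}) / 2`,
which is `0` or `1`; hence `cos(π ∑_{i<p} sin θ_i) = (-1)^{c_p}` cancels the sign of `sin θ_p`.
-/

open Finset Real

noncomputable def cornerAngle (b : ℕ → Bool) (p : ℕ) : ℝ :=
  if b p then (Nat.count (b · = true) p % 2 : ℕ) * π + π / 2 else 0

section cornerAngle

variable (b : ℕ → Bool) (p : ℕ)

theorem cornerAngle_mem : cornerAngle b p = 0 ∨ cornerAngle b p = π / 2 ∨
    cornerAngle b p = 3 * π / 2 := by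
  unfold cornerAngle
  split_ifs
  · rcases Nat.mod_two_eq_zero_or_one (Nat.count (b · = true) p) with h | h <;> rw [h]
    · simp
    · right; right; push_cast; ring
  · simp

theorem cos_cornerAngle : cos (cornerAngle b p) = if b p then 0 else 1 := by
  unfold cornerAngle
  split_ifs <;> simp [cos_add_pi_div_two, sin_nat_mul_pi]

theorem sin_cornerAngle :
    sin (cornerAngle b p) = if b p then (-1) ^ Nat.count (b · = true) p else 0 := by
  unfold cornerAngle
  split_ifs
  · rw [sin_add_pi_div_two, cos_nat_mul_pi, ← neg_one_pow_eq_pow_mod_two]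
  · simp

theorem sum_range_sin_cornerAngle :
    ∑ i ∈ range p, sin (cornerAngle b i) = (1 - (-1) ^ Nat.count (b · = true) p) / 2 := by
  induction p with
  | zero => simp
  | succ p ih =>
    rw [sum_range_succ, ih, sin_cornerAngle, Nat.count_succ]
    cases b p
    · simp
    · simp only [if_true, pow_succ]; ring

end cornerAngle

theorem cos_pi_mul_one_sub_neg_one_pow_div_two (k : ℕ) :
    cos (π * ((1 - (-1) ^ k) / 2)) = (-1) ^ k := by
  rcases Nat.even_or_odd k with hk | hk <;> simp [hk.neg_one_pow]

theorem Fin.sum_Iio_eq_sum_range {M : Type*} [AddCommMonoid M] {n : ℕ} (f : ℕ → M)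
    (p : Fin n) : ∑ i ∈ Iio p, f i = ∑ i ∈ range p, f i := by
  rw [← Nat.Iio_eq_range, ← Fin.map_valEmbedding_Iio, sum_map]
  rfl

theorem two_local_full_entanglement_reaches_all_corners_general
    (n : ℕ) (b : Fin n → Bool) :
    ∃ θ : Fin n → ℝ,
      (∀ p, θ p = 0 ∨ θ p = π / 2 ∨ θ p = 3 * π / 2) ∧
      ∀ p : Fin n,
        Real.cos (θ p) = (if b p then (0 : ℝ) else 1) ∧
        Real.cos (π * ∑ i ∈ Finset.Iio p, Real.sin (θ i)) * Real.sin (θ p)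
          = (if b p then (1 : ℝ) else 0) := by
  set B : ℕ → Bool := fun i => if h : i < n then b ⟨i, h⟩ else false
  refine ⟨fun p => cornerAngle B p, fun p => cornerAngle_mem B p, fun p => ?_⟩
  have hB : B p = b p := dif_pos p.isLt
  rw [cos_cornerAngle, Fin.sum_Iio_eq_sum_range (fun i => sin (cornerAngle B i)),
    sum_range_sin_cornerAngle, cos_pi_mul_one_sub_neg_one_pow_div_two, sin_cornerAngle, hB]
  cases b p <;> simp [← mul_pow]

/-- **Lemma 1, full-entanglement case (combinatorial core).** For every Boolean vector
`b`, the rotation angles can be chosen in `{0, π/2, 3π/2}` so that, for every qubit `p`,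
`cos θ_p = (if b_p then 0 else 1)` and
`(−1)^{∑_{i<p} sin θ_i} · sin θ_p = cos(π ∑_{i<p} sin θ_i) · sin θ_p = (if b_p then 1 else 0)`,
i.e. the two-local VQC with full entanglement outputs the computational basis state `|b⟩`. -/
theorem two_local_full_entanglement_reaches_all_corners
    (n : ℕ) (hn : 1 ≤ n) (b : Fin n → Bool) :
    ∃ θ : Fin n → ℝ,
      (∀ p, θ p = 0 ∨ θ p = π / 2 ∨ θ p = 3 * π / 2) ∧
      ∀ p : Fin n,
        Real.cos (θ p) = (if b p then (0 : ℝ) else 1) ∧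
        Real.cos (π * ∑ i ∈ Finset.Iio p, Real.sin (θ i)) * Real.sin (θ p)
          = (if b p then (1 : ℝ) else 0) :=
  two_local_full_entanglement_reaches_all_corners_general n b
end

section
/- For every n ≥ 1 and every Boolean vector b : Fin n → Bool, there exists θ : Fin n → ℝ with θ_p ∈ {0, π/2, 3π/2} for every p, such that: Real.cos(θ_0) = (if b_0 then 0 else 1), Real.sin(θ_0) = (if b_0 then 1 else 0), and for every p ≥ 1: Real.cos(θ_p) = (if b_p then 0 else 1) and Real.cos(π · Real.sin(θ_{p−1})) · Real.sin(θ_p) = (if b_p then 1 else 0). -/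
open Finset Real

/-!
Encode bit `1` on a qubit by the angle `π/2` (so `sin θ = 1`), bit `0` by `0`. The controlled-Z
gate from a predecessor in state `|1⟩` flips the sign of the `|1⟩` amplitude, i.e. multiplies it
by `cos (π · sin θ_{p-1}) = -1`; choosing `3π/2` instead of `π/2` (so `sin θ = -1`) for a `1`
whose predecessor is also `1` undoes this flip. The first qubit has no predecessor.
-/

theorem Real.cos_three_pi_div_two : cos (3 * π / 2) = 0 := by
  rw [show 3 * π / 2 = π / 2 + π by ring, cos_add_pi, cos_pi_div_two, neg_zero]

theorem Real.sin_three_pi_div_two : sin (3 * π / 2) = -1 := by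
  rw [show 3 * π / 2 = π / 2 + π by ring, sin_add_pi, sin_pi_div_two]

noncomputable def bitAngle (prev cur : Bool) : ℝ :=
  if cur then (if prev then 3 * π / 2 else π / 2) else 0

theorem bitAngle_eq_zero_or_pi_div_two_or_three_pi_div_two (prev cur : Bool) :
    bitAngle prev cur = 0 ∨ bitAngle prev cur = π / 2 ∨ bitAngle prev cur = 3 * π / 2 := by
  cases prev <;> cases cur <;> simp [bitAngle]

theorem cos_bitAngle (prev cur : Bool) : cos (bitAngle prev cur) = if cur then 0 else 1 := by
  cases prev <;> cases cur <;> simp [bitAngle, cos_three_pi_div_two]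

theorem sin_bitAngle (prev cur : Bool) :
    sin (bitAngle prev cur) = if cur then (if prev then -1 else 1) else 0 := by
  cases prev <;> cases cur <;> simp [bitAngle, sin_three_pi_div_two]

theorem cos_pi_mul_sin_bitAngle (prev cur : Bool) :
    cos (π * sin (bitAngle prev cur)) = if cur then -1 else 1 := by
  cases prev <;> cases cur <;> simp [sin_bitAngle]

theorem cos_pi_mul_sin_bitAngle_mul_sin_bitAngle (prevprev prev cur : Bool) :
    cos (π * sin (bitAngle prevprev prev)) * sin (bitAngle prev cur) = if cur then 1 else 0 := by
  rw [cos_pi_mul_sin_bitAngle, sin_bitAngle]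
  cases prev <;> cases cur <;> norm_num

def prevBit {n : ℕ} (b : Fin n → Bool) (p : Fin n) : Bool :=
  if h : p.val = 0 then false else b ⟨p.val - 1, by omega⟩

/-- **Lemma 1, linear-entanglement case (combinatorial core).** For every Boolean vector
`b`, the rotation angles can be chosen in `{0, π/2, 3π/2}` so that the first qubit is
`cos θ_0 |0⟩ + sin θ_0 |1⟩ = |b_0⟩` and, for `p ≥ 1`,
`cos θ_p = (if b_p then 0 else 1)` and
`(−1)^{sin θ_{p−1}} sin θ_p = cos(π sin θ_{p−1}) · sin θ_p = (if b_p then 1 else 0)`,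
i.e. the two-local VQC with linear entanglement outputs the computational basis state `|b⟩`. -/
theorem two_local_linear_entanglement_reaches_all_corners
    (n : ℕ) (hn : 1 ≤ n) (b : Fin n → Bool) :
    ∃ θ : Fin n → ℝ,
      (∀ p, θ p = 0 ∨ θ p = π / 2 ∨ θ p = 3 * π / 2) ∧
      Real.cos (θ ⟨0, hn⟩) = (if b ⟨0, hn⟩ then (0 : ℝ) else 1) ∧
      Real.sin (θ ⟨0, hn⟩) = (if b ⟨0, hn⟩ then (1 : ℝ) else 0) ∧
      ∀ p : Fin n, 1 ≤ p.val →
        Real.cos (θ p) = (if b p then (0 : ℝ) else 1) ∧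
        Real.cos (π * Real.sin (θ ⟨p.val - 1, Nat.lt_of_le_of_lt (Nat.sub_le _ _) p.isLt⟩))
            * Real.sin (θ p) = (if b p then (1 : ℝ) else 0) := by
  refine ⟨fun p => bitAngle (prevBit b p) (b p),
    fun p => bitAngle_eq_zero_or_pi_div_two_or_three_pi_div_two _ _,
    cos_bitAngle _ _, ?_, fun p hp => ⟨cos_bitAngle _ _, ?_⟩⟩
  · simp [sin_bitAngle, prevBit]
  · have hprev : prevBit b p = b ⟨p.val - 1, by omega⟩ := dif_neg (by omega)
    simp only [hprev]
    exact cos_pi_mul_sin_bitAngle_mul_sin_bitAngle _ _ _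
end

section
/- Let N, M ≥ 1, f₀ ∈ ℝ^N, F an N×M real matrix, L ≥ 0, ε ≥ 0, and s₀ > 0. Suppose p̂ ∈ 𝒫 = {p ∈ ℝ^N : p ≥ 0, ∑_k p_k = 1} satisfies (Fᵀp̂)_m ≤ −εL − s₀ for every m. Let P* := inf { f₀ᵀp : p ∈ 𝒫, Fᵀp ≤ 0 }, and assume the feasible set {p ∈ 𝒫 : Fᵀp ≤ 0} is nonempty. If λ̃ ∈ ℝ^M with λ̃ ≥ 0 satisfies inf_{p ∈ 𝒫} (f₀ + Fλ̃)ᵀp + εL‖λ̃‖₁ ≥ P*, then ‖λ̃‖₁ ≤ (f₀ᵀp̂ − P*) / s₀. -/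
open Finset

/-!
Evaluate the dual function of `λ̃` at the strictly feasible point `p̂`: its infimum over the
simplex is at most the Lagrangian at `p̂`, which is `f₀ᵀp̂ + λ̃ᵀFᵀp̂ ≤ f₀ᵀp̂ − (εL + s₀)‖λ̃‖₁`
because `λ̃ ≥ 0`. Combined with the hypothesis `P* ≤ D̃(λ̃)`, the `εL‖λ̃‖₁` terms cancel and
`P* ≤ f₀ᵀp̂ − s₀‖λ̃‖₁` remains.
-/

section

variable {ι κ : Type*} [Fintype ι] [Fintype κ]

theorem bddBelow_sum_mul_stdSimplex (c : ι → ℝ) :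
    BddBelow {v : ℝ | ∃ p, p ∈ stdSimplex ℝ ι ∧ v = ∑ k, c k * p k} := by
  have hcont : Continuous fun p : ι → ℝ => ∑ k, c k * p k := by fun_prop
  have himage : {v : ℝ | ∃ p, p ∈ stdSimplex ℝ ι ∧ v = ∑ k, c k * p k}
      = (fun p => ∑ k, c k * p k) '' stdSimplex ℝ ι := by
    ext v
    exact exists_congr fun p => and_congr_right fun _ => eq_comm
  rw [himage]
  exact (isCompact_stdSimplex ℝ ι).bddBelow_image hcont.continuousOn

theorem sInf_sum_mul_stdSimplex_le (c : ι → ℝ) {p : ι → ℝ} (hp : p ∈ stdSimplex ℝ ι) :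
    sInf {v : ℝ | ∃ p, p ∈ stdSimplex ℝ ι ∧ v = ∑ k, c k * p k} ≤ ∑ k, c k * p k :=
  csInf_le (bddBelow_sum_mul_stdSimplex c) ⟨p, hp, rfl⟩

theorem sum_add_mulVec_mul (f₀ p : ι → ℝ) (F : Matrix ι κ ℝ) (lam : κ → ℝ) :
    ∑ k, (f₀ k + ∑ m, F k m * lam m) * p k
      = ∑ k, f₀ k * p k + ∑ m, lam m * ∑ k, F k m * p k := by
  simp only [add_mul, sum_add_distrib, sum_mul, mul_sum]
  rw [sum_comm]
  congr 1
  exact sum_congr rfl fun m _ => sum_congr rfl fun k _ => by ring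

theorem sum_mul_le_mul_sum_of_le {lam g : κ → ℝ} {a : ℝ} (hlam : ∀ m, 0 ≤ lam m)
    (hg : ∀ m, g m ≤ a) : ∑ m, lam m * g m ≤ a * ∑ m, lam m := by
  rw [mul_sum]
  exact sum_le_sum fun m _ => by
    rw [mul_comm a]
    exact mul_le_mul_of_nonneg_left (hg m) (hlam m)

end

theorem multiplier_bound_general
    (N M : ℕ)
    (f0 : Fin N → ℝ) (F : Matrix (Fin N) (Fin M) ℝ)
    (L ε s0 : ℝ) (hs0 : 0 < s0)
    (phat : Fin N → ℝ)
    (hphat : (∀ k, 0 ≤ phat k) ∧ ∑ k, phat k = 1)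
    (hfeas : ∀ m, ∑ k, F k m * phat k ≤ -(ε * L) - s0)
    (Pstar : ℝ)
    (lamt : Fin M → ℝ) (hlamt : ∀ m, 0 ≤ lamt m)
    (hdual : Pstar ≤ sInf {v : ℝ | ∃ p : Fin N → ℝ, ((∀ k, 0 ≤ p k) ∧ ∑ k, p k = 1) ∧
          v = ∑ k, (f0 k + ∑ m, F k m * lamt m) * p k}
        + ε * L * ∑ m, |lamt m|) :
    ∑ m, |lamt m| ≤ ((∑ k, f0 k * phat k) - Pstar) / s0 := by
  have hnorm : ∑ m, |lamt m| = ∑ m, lamt m := sum_congr rfl fun m _ => abs_of_nonneg (hlamt m)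
  rw [hnorm] at hdual ⊢
  have key : Pstar ≤ ∑ k, f0 k * phat k - s0 * ∑ m, lamt m :=
    calc Pstar
        ≤ ∑ k, (f0 k + ∑ m, F k m * lamt m) * phat k + ε * L * ∑ m, lamt m :=
          hdual.trans (add_le_add_left (sInf_sum_mul_stdSimplex_le _ hphat) _)
      _ = ∑ k, f0 k * phat k + ∑ m, lamt m * ∑ k, F k m * phat k + ε * L * ∑ m, lamt m := by
          rw [sum_add_mulVec_mul]
      _ ≤ ∑ k, f0 k * phat k + (-(ε * L) - s0) * ∑ m, lamt m + ε * L * ∑ m, lamt m := by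
          gcongr
          exact sum_mul_le_mul_sum_of_le hlamt hfeas
      _ = ∑ k, f0 k * phat k - s0 * ∑ m, lamt m := by ring
  rw [le_div_iff₀ hs0]
  linarith

/-- **Multiplier bound (eq:degradation2).** With `p̂` strictly feasible (slack `s₀ > 0`)
for the perturbed primal LP `min_{p∈𝒫} f₀ᵀp s.to Fᵀp ≤ −εL·1`, `P*` the optimal value of
the original (feasible) LP, and `λ̃ ≥ 0` whose perturbed dual value is at least `P*`,
one has `‖λ̃‖₁ ≤ (f₀ᵀp̂ − P*)/s₀`. -/
theorem multiplier_bound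
    (N M : ℕ) (hN : 1 ≤ N) (hM : 1 ≤ M)
    (f0 : Fin N → ℝ) (F : Matrix (Fin N) (Fin M) ℝ)
    (L ε s0 : ℝ) (hL : 0 ≤ L) (hε : 0 ≤ ε) (hs0 : 0 < s0)
    (phat : Fin N → ℝ)
    (hphat : (∀ k, 0 ≤ phat k) ∧ ∑ k, phat k = 1)
    (hfeas : ∀ m, ∑ k, F k m * phat k ≤ -(ε * L) - s0)
    (Pstar : ℝ)
    (hPstar : Pstar = sInf {v : ℝ | ∃ p : Fin N → ℝ, ((∀ k, 0 ≤ p k) ∧ ∑ k, p k = 1) ∧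
        (∀ m, ∑ k, F k m * p k ≤ 0) ∧ v = ∑ k, f0 k * p k})
    (hfeas0 : ∃ p : Fin N → ℝ, ((∀ k, 0 ≤ p k) ∧ ∑ k, p k = 1) ∧
        ∀ m, ∑ k, F k m * p k ≤ 0)
    (lamt : Fin M → ℝ) (hlamt : ∀ m, 0 ≤ lamt m)
    (hdual : Pstar ≤ sInf {v : ℝ | ∃ p : Fin N → ℝ, ((∀ k, 0 ≤ p k) ∧ ∑ k, p k = 1) ∧
          v = ∑ k, (f0 k + ∑ m, F k m * lamt m) * p k}
        + ε * L * ∑ m, |lamt m|) :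
    ∑ m, |lamt m| ≤ ((∑ k, f0 k * phat k) - Pstar) / s0 :=
  multiplier_bound_general N M f0 F L ε s0 hs0 phat hphat hfeas Pstar lamt hlamt hdual
end

section
/- Let N, M ≥ 1, f₀, f₁, …, f_M ∈ ℝ^N, F the N×M matrix with columns f₁,…,f_M, L := max_{1 ≤ m ≤ M} ‖f_m‖₁, and ε > 0. Let 𝒫 = {p ∈ ℝ^N : p ≥ 0, ∑_k p_k = 1}, define P* := inf { f₀ᵀp : p ∈ 𝒫, Fᵀp ≤ 0 }, D* := sup_{λ ≥ 0} inf_{p ∈ 𝒫} (f₀+Fλ)ᵀp, and for a nonempty S ⊆ 𝒫 define D_θ* := sup_{λ ≥ 0} inf_{q ∈ S} (f₀+Fλ)ᵀq. Assume: (i) for every p ∈ 𝒫 there exists q ∈ S with ‖p − q‖_∞ ≤ ε; (ii) there exist p̂ ∈ 𝒫 and s₀ > 0 with (Fᵀp̂)_m ≤ −εL − s₀ for all m; (iii) λ̃ ∈ ℝ^M, λ̃ ≥ 0, satisfies inf_{p∈𝒫}(f₀+Fλ̃)ᵀp + εL‖λ̃‖₁ = sup_{λ ≥ 0}[inf_{p∈𝒫}(f₀+Fλ)ᵀp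 + εL‖λ‖₁] = inf{f₀ᵀp : p∈𝒫, Fᵀp ≤ −εL·1}; and (iv) strong duality D* = P* holds for the original LP. Then D* ≤ D_θ* ≤ D* + ε‖f₀‖₁ + εL‖λ̃‖₁. -/
/-!
Write `I_T(λ) = inf_{q ∈ T} (f₀ + λᵀF)ᵀq`, so that `D* = sup_{λ ≥ 0} I_𝒫(λ)` and
`D_θ* = sup_{λ ≥ 0} I_S(λ)`. Since `S ⊆ 𝒫`, `I_𝒫 ≤ I_S`, which gives the lower bound.
Conversely, moving from `p ∈ 𝒫` to an `ε`-close `q ∈ S` changes a linear cost `cᵀp` by at most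
`ε‖c‖₁`, and `‖f₀ + λᵀF‖₁ ≤ ‖f₀‖₁ + L‖λ‖₁`; hence
`I_S(λ) ≤ I_𝒫(λ) + εL‖λ‖₁ + ε‖f₀‖₁ ≤ I_𝒫(λ̃) + εL‖λ̃‖₁ + ε‖f₀‖₁ ≤ D* + εL‖λ̃‖₁ + ε‖f₀‖₁`,
the middle step being the optimality of `λ̃` for the penalized dual. The strictly feasible point
`p̂` keeps all the suprema involved finite.
-/

open Finset Matrix

section InfDot

variable {ι : Type*} [Fintype ι]

-- `sInf` is `0` on empty or unbounded-below sets, hence the hypotheses `T ⊆ stdSimplex ℝ ι`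
-- and `T.Nonempty` below.
noncomputable def infDot (T : Set (ι → ℝ)) (c : ι → ℝ) : ℝ :=
  sInf {v | ∃ q ∈ T, v = c ⬝ᵥ q}

lemma bddBelow_dotProduct_of_subset_stdSimplex {T : Set (ι → ℝ)}
    (hT : T ⊆ stdSimplex ℝ ι) (c : ι → ℝ) : BddBelow {v | ∃ q ∈ T, v = c ⬝ᵥ q} := by
  obtain ⟨b, hb⟩ := (isCompact_stdSimplex ℝ ι).bddBelow_image
    (f := (c ⬝ᵥ ·)) (Continuous.continuousOn (by fun_prop))
  exact ⟨b, by rintro v ⟨q, hq, rfl⟩; exact hb ⟨q, hT hq, rfl⟩⟩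

lemma infDot_le {T : Set (ι → ℝ)} (hT : T ⊆ stdSimplex ℝ ι) (c : ι → ℝ) {q : ι → ℝ}
    (hq : q ∈ T) : infDot T c ≤ c ⬝ᵥ q :=
  csInf_le (bddBelow_dotProduct_of_subset_stdSimplex hT c) ⟨q, hq, rfl⟩

lemma infDot_anti {T T' : Set (ι → ℝ)} (hTT' : T ⊆ T') (hT : T.Nonempty)
    (hT' : T' ⊆ stdSimplex ℝ ι) (c : ι → ℝ) : infDot T' c ≤ infDot T c := by
  obtain ⟨q, hq⟩ := hT
  refine csInf_le_csInf (bddBelow_dotProduct_of_subset_stdSimplex hT' c) ⟨_, q, hq, rfl⟩ ?_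
  rintro v ⟨q, hq, rfl⟩
  exact ⟨q, hTT' hq, rfl⟩

lemma dotProduct_le_dotProduct_add_of_abs_sub_le (c : ι → ℝ) {p q : ι → ℝ} {ε : ℝ}
    (hpq : ∀ k, |p k - q k| ≤ ε) : c ⬝ᵥ q ≤ c ⬝ᵥ p + ε * ∑ k, |c k| := by
  have h : c ⬝ᵥ (q - p) ≤ ∑ k, |c k| * ε := sum_le_sum fun k _ => by
    refine (le_abs_self _).trans ?_
    rw [abs_mul, Pi.sub_apply, abs_sub_comm]
    exact mul_le_mul_of_nonneg_left (hpq k) (abs_nonneg _)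
  rw [dotProduct_sub, ← sum_mul] at h
  linarith [mul_comm ε (∑ k, |c k|)]

lemma infDot_le_infDot_stdSimplex_add {T : Set (ι → ℝ)} (hT : T ⊆ stdSimplex ℝ ι)
    (hTne : T.Nonempty) {ε : ℝ} (happrox : ∀ p ∈ stdSimplex ℝ ι, ∃ q ∈ T, ∀ k, |p k - q k| ≤ ε)
    (c : ι → ℝ) : infDot T c ≤ infDot (stdSimplex ℝ ι) c + ε * ∑ k, |c k| := by
  obtain ⟨q₀, hq₀⟩ := hTne
  rw [← sub_le_iff_le_add]
  refine le_csInf ⟨_, q₀, hT hq₀, rfl⟩ ?_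
  rintro v ⟨p, hp, rfl⟩
  obtain ⟨q, hq, hpq⟩ := happrox p hp
  linarith [infDot_le hT c hq, dotProduct_le_dotProduct_add_of_abs_sub_le c hpq]

end InfDot

section Duality

variable {ι κ : Type*} [Fintype ι] [Fintype κ]

lemma sum_abs_add_vecMul_le (f0 : ι → ℝ) {F : Matrix κ ι ℝ} {L : ℝ}
    (hF : ∀ m, ∑ k, |F m k| ≤ L) (lam : κ → ℝ) :
    ∑ k, |(f0 + lam ᵥ* F) k| ≤ ∑ k, |f0 k| + L * ∑ m, |lam m| := by
  calc ∑ k, |(f0 + lam ᵥ* F) k|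
      ≤ ∑ k, (|f0 k| + ∑ m, |lam m| * |F m k|) := sum_le_sum fun k _ => by
        refine (abs_add_le _ _).trans (add_le_add le_rfl ?_)
        exact (abs_sum_le_sum_abs (fun m => lam m * F m k) univ).trans_eq (by simp only [abs_mul])
    _ = ∑ k, |f0 k| + ∑ m, |lam m| * ∑ k, |F m k| := by
        simp only [sum_add_distrib, mul_sum]
        rw [sum_comm]
    _ ≤ ∑ k, |f0 k| + ∑ m, |lam m| * L := by
        gcongr with m
        exact hF m
    _ = ∑ k, |f0 k| + L * ∑ m, |lam m| := by rw [← sum_mul, mul_comm]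

lemma add_vecMul_dotProduct_add_le {F : Matrix κ ι ℝ} {p : ι → ℝ} {c : ℝ}
    (hp : ∀ m, (F *ᵥ p) m ≤ -c) (f0 : ι → ℝ) {lam : κ → ℝ} (hlam : ∀ m, 0 ≤ lam m) :
    (f0 + lam ᵥ* F) ⬝ᵥ p + c * ∑ m, |lam m| ≤ f0 ⬝ᵥ p := by
  have h : lam ⬝ᵥ (F *ᵥ p) ≤ lam ⬝ᵥ fun _ => -c :=
    dotProduct_le_dotProduct_of_nonneg_left hp hlam
  have hsum : lam ⬝ᵥ (fun _ => -c) = -(c * ∑ m, |lam m|) := by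
    simp only [dotProduct, ← sum_mul, abs_of_nonneg (hlam _)]
    ring
  rw [add_dotProduct, ← dotProduct_mulVec]
  linarith

variable (T : Set (ι → ℝ)) (f0 : ι → ℝ) (F : Matrix κ ι ℝ)

noncomputable def dualFun (lam : κ → ℝ) : ℝ := infDot T (f0 + lam ᵥ* F)

noncomputable def dualValue : ℝ :=
  sSup {d | ∃ lam : κ → ℝ, (∀ m, 0 ≤ lam m) ∧ d = dualFun T f0 F lam}

noncomputable def penalizedDualValue (c : ℝ) : ℝ :=
  sSup {d | ∃ lam : κ → ℝ, (∀ m, 0 ≤ lam m) ∧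
    d = dualFun (stdSimplex ℝ ι) f0 F lam + c * ∑ m, |lam m|}

variable {T f0 F}

lemma bddAbove_penalizedDual {p : ι → ℝ} (hp : p ∈ stdSimplex ℝ ι) {c : ℝ}
    (hslack : ∀ m, (F *ᵥ p) m ≤ -c) :
    BddAbove {d | ∃ lam : κ → ℝ, (∀ m, 0 ≤ lam m) ∧
      d = dualFun (stdSimplex ℝ ι) f0 F lam + c * ∑ m, |lam m|} := by
  refine ⟨f0 ⬝ᵥ p, ?_⟩
  rintro d ⟨lam, hlam, rfl⟩
  unfold dualFun
  linarith [infDot_le subset_rfl (f0 + lam ᵥ* F) hp, add_vecMul_dotProduct_add_le hslack f0 hlam]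

lemma dualFun_add_le_penalizedDualValue {p : ι → ℝ} (hp : p ∈ stdSimplex ℝ ι) {c : ℝ}
    (hslack : ∀ m, (F *ᵥ p) m ≤ -c) {lam : κ → ℝ} (hlam : ∀ m, 0 ≤ lam m) :
    dualFun (stdSimplex ℝ ι) f0 F lam + c * ∑ m, |lam m| ≤ penalizedDualValue f0 F c :=
  le_csSup (bddAbove_penalizedDual hp hslack) ⟨lam, hlam, rfl⟩

lemma dualFun_le_dualValue_stdSimplex {p : ι → ℝ} (hp : p ∈ stdSimplex ℝ ι) {c : ℝ}
    (hc : 0 ≤ c) (hslack : ∀ m, (F *ᵥ p) m ≤ -c) {lam : κ → ℝ} (hlam : ∀ m, 0 ≤ lam m) :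
    dualFun (stdSimplex ℝ ι) f0 F lam ≤ dualValue (stdSimplex ℝ ι) f0 F := by
  obtain ⟨b, hb⟩ := bddAbove_penalizedDual (f0 := f0) hp hslack
  refine le_csSup ⟨b, ?_⟩ ⟨lam, hlam, rfl⟩
  rintro d ⟨lam, hlam, rfl⟩
  have hpen : 0 ≤ c * ∑ m, |lam m| := mul_nonneg hc (sum_nonneg fun m _ => abs_nonneg _)
  linarith [hb ⟨lam, hlam, rfl⟩]

lemma dualFun_le_dualFun_stdSimplex_add (hT : T ⊆ stdSimplex ℝ ι) (hTne : T.Nonempty)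
    {ε : ℝ} (hε : 0 ≤ ε) (happrox : ∀ p ∈ stdSimplex ℝ ι, ∃ q ∈ T, ∀ k, |p k - q k| ≤ ε)
    {L : ℝ} (hF : ∀ m, ∑ k, |F m k| ≤ L) (lam : κ → ℝ) :
    dualFun T f0 F lam
      ≤ dualFun (stdSimplex ℝ ι) f0 F lam + ε * ∑ k, |f0 k| + ε * L * ∑ m, |lam m| := by
  have h := mul_le_mul_of_nonneg_left (sum_abs_add_vecMul_le f0 hF lam) hε
  unfold dualFun
  linarith [infDot_le_infDot_stdSimplex_add hT hTne happrox (f0 + lam ᵥ* F)]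

lemma dualValue_stdSimplex_le_dualValue (hT : T ⊆ stdSimplex ℝ ι) (hTne : T.Nonempty)
    (hbdd : BddAbove {d | ∃ lam : κ → ℝ, (∀ m, 0 ≤ lam m) ∧ d = dualFun T f0 F lam}) :
    dualValue (stdSimplex ℝ ι) f0 F ≤ dualValue T f0 F := by
  refine csSup_le ⟨_, 0, fun _ => le_rfl, rfl⟩ ?_
  rintro d ⟨lam, hlam, rfl⟩
  exact (infDot_anti hT hTne subset_rfl _).trans (le_csSup hbdd ⟨lam, hlam, rfl⟩)

end Duality
theorem degradation_bound_general
    (N M : ℕ)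
    (f0 : Fin N → ℝ) (f : Fin M → Fin N → ℝ) (L : ℝ)
    (hL : IsGreatest {x : ℝ | ∃ m : Fin M, x = ∑ k, |f m k|} L)
    (ε : ℝ) (hε : 0 < ε)
    (S : Set (Fin N → ℝ)) (hSne : S.Nonempty)
    (hSsub : S ⊆ {p : Fin N → ℝ | (∀ k, 0 ≤ p k) ∧ ∑ k, p k = 1})
    (happrox : ∀ p : Fin N → ℝ, ((∀ k, 0 ≤ p k) ∧ ∑ k, p k = 1) →
      ∃ q ∈ S, ∀ k, |p k - q k| ≤ ε)
    (phat : Fin N → ℝ) (s0 : ℝ) (hs0 : 0 < s0)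
    (hphat : (∀ k, 0 ≤ phat k) ∧ ∑ k, phat k = 1)
    (hfeas : ∀ m, ∑ k, f m k * phat k ≤ -(ε * L) - s0)
    (Dstar Dthetastar : ℝ)
    (hDstar : Dstar = sSup {d : ℝ | ∃ lam : Fin M → ℝ, (∀ m, 0 ≤ lam m) ∧
        d = sInf {v : ℝ | ∃ p : Fin N → ℝ, ((∀ k, 0 ≤ p k) ∧ ∑ k, p k = 1) ∧
            v = ∑ k, (f0 k + ∑ m, lam m * f m k) * p k}})
    (hDthetastar : Dthetastar = sSup {d : ℝ | ∃ lam : Fin M → ℝ, (∀ m, 0 ≤ lam m) ∧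
        d = sInf {v : ℝ | ∃ q ∈ S, v = ∑ k, (f0 k + ∑ m, lam m * f m k) * q k}})
    (lamt : Fin M → ℝ) (hlamt : ∀ m, 0 ≤ lamt m)
    (hopt1 : sInf {v : ℝ | ∃ p : Fin N → ℝ, ((∀ k, 0 ≤ p k) ∧ ∑ k, p k = 1) ∧
          v = ∑ k, (f0 k + ∑ m, lamt m * f m k) * p k} + ε * L * ∑ m, |lamt m|
        = sSup {d : ℝ | ∃ lam : Fin M → ℝ, (∀ m, 0 ≤ lam m) ∧
            d = sInf {v : ℝ | ∃ p : Fin N → ℝ, ((∀ k, 0 ≤ p k) ∧ ∑ k, p k = 1) ∧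
                  v = ∑ k, (f0 k + ∑ m, lam m * f m k) * p k}
              + ε * L * ∑ m, |lam m|}) :
    Dstar ≤ Dthetastar ∧
      Dthetastar ≤ Dstar + ε * (∑ k, |f0 k|) + ε * L * ∑ m, |lamt m| := by
  -- `hDstar`, `hDthetastar` and `hopt1` are `dualValue` and `penalizedDualValue` unfolded,
  -- with `F = Matrix.of f` and `𝒫 = stdSimplex ℝ (Fin N)`.
  obtain ⟨m₀, hm₀⟩ := hL.1
  have hL0 : 0 ≤ L := hm₀ ▸ sum_nonneg fun k _ => abs_nonneg (f m₀ k)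
  have hF : ∀ m, ∑ k, |Matrix.of f m k| ≤ L := fun m => hL.2 ⟨m, rfl⟩
  have hslack : ∀ m, (Matrix.of f *ᵥ phat) m ≤ -(ε * L) := fun m => (hfeas m).trans (by linarith)
  have hbound : Dstar + ε * (∑ k, |f0 k|) + ε * L * ∑ m, |lamt m| ∈ upperBounds
      {d | ∃ lam : Fin M → ℝ, (∀ m, 0 ≤ lam m) ∧ d = dualFun S f0 (Matrix.of f) lam} := by
    rintro d ⟨lam, hlam, rfl⟩
    have happr := dualFun_le_dualFun_stdSimplex_add (f0 := f0) hSsub hSne hε.le happrox hF lam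
    have hpen : dualFun (stdSimplex ℝ (Fin N)) f0 (Matrix.of f) lam + ε * L * ∑ m, |lam m|
        ≤ dualFun (stdSimplex ℝ (Fin N)) f0 (Matrix.of f) lamt + ε * L * ∑ m, |lamt m| :=
      (dualFun_add_le_penalizedDualValue hphat hslack hlam).trans_eq hopt1.symm
    have hlamt_le : dualFun (stdSimplex ℝ (Fin N)) f0 (Matrix.of f) lamt ≤ Dstar :=
      hDstar ▸ dualFun_le_dualValue_stdSimplex hphat (by positivity) hslack hlamt
    linarith
  rw [hDthetastar]
  exact ⟨hDstar ▸ dualValue_stdSimplex_le_dualValue hSsub hSne ⟨_, hbound⟩,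
    csSup_le ⟨_, 0, fun _ => le_rfl, rfl⟩ hbound⟩

/-- **Theorem 2 (performance degradation bound).** Let `P*`, `D*` be the primal and dual
optimal values of the LP `min_{p∈𝒫} f₀ᵀp s.to Fᵀp ≤ 0` over the probability simplex `𝒫`,
and `D_θ*` the optimal dual value of its variational restriction to `S ⊆ 𝒫`. Under
(i) `ε`-approximation of `𝒫` by `S` in `ℓ∞`, (ii) strict feasibility with slack `s₀` of
the perturbed primal `Fᵀp ≤ −εL·1`, (iii) `λ̃ ≥ 0` an optimal dual vector of the perturbed
problem attaining strong duality, and (iv) strong duality `D* = P*` of the original LP: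
`D* ≤ D_θ* ≤ D* + ε‖f₀‖₁ + εL‖λ̃‖₁`, where `L = max_m ‖f_m‖₁`. -/
theorem degradation_bound
    (N M : ℕ) (hN : 1 ≤ N) (hM : 1 ≤ M)
    (f0 : Fin N → ℝ) (f : Fin M → Fin N → ℝ) (L : ℝ)
    (hL : IsGreatest {x : ℝ | ∃ m : Fin M, x = ∑ k, |f m k|} L)
    (ε : ℝ) (hε : 0 < ε)
    (S : Set (Fin N → ℝ)) (hSne : S.Nonempty)
    (hSsub : S ⊆ {p : Fin N → ℝ | (∀ k, 0 ≤ p k) ∧ ∑ k, p k = 1})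
    (happrox : ∀ p : Fin N → ℝ, ((∀ k, 0 ≤ p k) ∧ ∑ k, p k = 1) →
      ∃ q ∈ S, ∀ k, |p k - q k| ≤ ε)
    (phat : Fin N → ℝ) (s0 : ℝ) (hs0 : 0 < s0)
    (hphat : (∀ k, 0 ≤ phat k) ∧ ∑ k, phat k = 1)
    (hfeas : ∀ m, ∑ k, f m k * phat k ≤ -(ε * L) - s0)
    (Pstar Dstar Dthetastar : ℝ)
    (hPstar : Pstar = sInf {v : ℝ | ∃ p : Fin N → ℝ, ((∀ k, 0 ≤ p k) ∧ ∑ k, p k = 1) ∧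
        (∀ m, ∑ k, f m k * p k ≤ 0) ∧ v = ∑ k, f0 k * p k})
    (hDstar : Dstar = sSup {d : ℝ | ∃ lam : Fin M → ℝ, (∀ m, 0 ≤ lam m) ∧
        d = sInf {v : ℝ | ∃ p : Fin N → ℝ, ((∀ k, 0 ≤ p k) ∧ ∑ k, p k = 1) ∧
            v = ∑ k, (f0 k + ∑ m, lam m * f m k) * p k}})
    (hDthetastar : Dthetastar = sSup {d : ℝ | ∃ lam : Fin M → ℝ, (∀ m, 0 ≤ lam m) ∧
        d = sInf {v : ℝ | ∃ q ∈ S, v = ∑ k, (f0 k + ∑ m, lam m * f m k) * q k}})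
    (lamt : Fin M → ℝ) (hlamt : ∀ m, 0 ≤ lamt m)
    (hopt1 : sInf {v : ℝ | ∃ p : Fin N → ℝ, ((∀ k, 0 ≤ p k) ∧ ∑ k, p k = 1) ∧
          v = ∑ k, (f0 k + ∑ m, lamt m * f m k) * p k} + ε * L * ∑ m, |lamt m|
        = sSup {d : ℝ | ∃ lam : Fin M → ℝ, (∀ m, 0 ≤ lam m) ∧
            d = sInf {v : ℝ | ∃ p : Fin N → ℝ, ((∀ k, 0 ≤ p k) ∧ ∑ k, p k = 1) ∧
                  v = ∑ k, (f0 k + ∑ m, lam m * f m k) * p k}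
              + ε * L * ∑ m, |lam m|})
    (hopt2 : sSup {d : ℝ | ∃ lam : Fin M → ℝ, (∀ m, 0 ≤ lam m) ∧
            d = sInf {v : ℝ | ∃ p : Fin N → ℝ, ((∀ k, 0 ≤ p k) ∧ ∑ k, p k = 1) ∧
                  v = ∑ k, (f0 k + ∑ m, lam m * f m k) * p k}
              + ε * L * ∑ m, |lam m|}
        = sInf {v : ℝ | ∃ p : Fin N → ℝ, ((∀ k, 0 ≤ p k) ∧ ∑ k, p k = 1) ∧
            (∀ m, ∑ k, f m k * p k ≤ -(ε * L)) ∧ v = ∑ k, f0 k * p k})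
    (hstrong : Dstar = Pstar) :
    Dstar ≤ Dthetastar ∧
      Dthetastar ≤ Dstar + ε * (∑ k, |f0 k|) + ε * L * ∑ m, |lamt m| :=
  degradation_bound_general N M f0 f L hL ε hε S hSne hSsub happrox phat s0 hs0 hphat hfeas Dstar
    Dthetastar hDstar hDthetastar lamt hlamt hopt1
end
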